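/- arXiv:math/0410375 — 5 statements merged into one kernel-verified Lean document; each statement's English description precedes it below -/
import Mathlib

section
/- Let K be a field of characteristic p > 0 and let r_1, ..., r_n ∈ K. Then the Moore determinant, i.e., the determinant of the n × n matrix whose (i, j) entry is r_j^{p^{i−1}} (rows indexed by i = 1, ..., n, columns by j = 1, ..., n), vanishes if and only if r_1, ..., r_n are linearly dependent over the prime field F_p. -/
section aux
variable (p : ℕ) [Fact p.Prime] (K : Type*) [Field K] [CharP K p]

/-- Fixed points of Frobenius lie in the prime field. -/
lemma frob_fixed_mem (x : K) (h : x ^ p = x) :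
    ∃ c : ZMod p, ZMod.castHom (dvd_refl p) K c = x := by
  have hp : p.Prime := Fact.out
  classical
  by_contra hc
  push_neg at hc
  set φ : ZMod p →+* K := ZMod.castHom (dvd_refl p) K with hφ
  set f : Polynomial K := Polynomial.X ^ p - Polynomial.X with hf
  have hdeg : f.natDegree = p := by
    rw [hf, Polynomial.natDegree_sub_eq_left_of_natDegree_lt, Polynomial.natDegree_X_pow]
    rw [Polynomial.natDegree_X, Polynomial.natDegree_X_pow]
    exact hp.one_lt
  have hf0 : f ≠ 0 := by
    intro h0
    rw [h0, Polynomial.natDegree_zero] at hdeg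
    exact hp.ne_zero hdeg.symm
  have hroot : ∀ y : K, y ^ p = y → y ∈ f.roots := by
    intro y hy
    rw [Polynomial.mem_roots hf0]
    simp [hf, Polynomial.IsRoot, hy]
  have himg : ∀ c : ZMod p, φ c ∈ f.roots := by
    intro c
    apply hroot
    rw [← map_pow, ZMod.pow_card]
  set T : Finset K := insert x (Finset.univ.image φ) with hT
  have hsub : T ⊆ f.roots.toFinset := by
    intro y hy
    rw [hT, Finset.mem_insert] at hy
    rw [Multiset.mem_toFinset]
    rcases hy with rfl | hy
    · exact hroot y h
    · obtain ⟨c, _, rfl⟩ := Finset.mem_image.mp hy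
      exact himg c
  have hcardT : T.card = p + 1 := by
    rw [hT, Finset.card_insert_of_notMem, Finset.card_image_of_injective _ (ZMod.castHom_injective K),
      Finset.card_univ, ZMod.card]
    intro hx
    obtain ⟨c, _, hcx⟩ := Finset.mem_image.mp hx
    exact hc c hcx
  have h1 : T.card ≤ f.roots.toFinset.card := Finset.card_le_card hsub
  have h2 : f.roots.toFinset.card ≤ Multiset.card f.roots := Multiset.toFinset_card_le _
  have h3 : Multiset.card f.roots ≤ p := hdeg ▸ Polynomial.card_roots' f
  omega

lemma moore_aux : ∀ n, ∀ r : Fin n → K,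
    Matrix.det (Matrix.of fun i j : Fin n => r j ^ p ^ (i : ℕ)) = 0 →
    ∃ c : Fin n → ZMod p, (∃ i, c i ≠ 0) ∧
      ∑ i, ZMod.castHom (dvd_refl p) K (c i) * r i = 0 := by
  intro n
  induction n using Nat.strong_induction_on with
  | _ n IH =>
  intro r hdet
  obtain ⟨a, ha0, ha⟩ := Matrix.exists_mulVec_eq_zero_iff.mpr hdet
  obtain ⟨j0, hj0⟩ : ∃ j, a j ≠ 0 := by
    by_contra hh
    push_neg at hh
    exact ha0 (funext hh)
  set b : Fin n → K := fun j => a j * (a j0)⁻¹ with hb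
  have hbj0 : b j0 = 1 := mul_inv_cancel₀ hj0
  have hrow : ∀ i : ℕ, i < n → ∑ j, r j ^ p ^ i * b j = 0 := by
    intro i hi
    have := congrFun ha ⟨i, hi⟩
    simp only [Matrix.mulVec, dotProduct, Matrix.of_apply, Pi.zero_apply] at this
    calc ∑ j, r j ^ p ^ i * b j
        = (∑ j, r j ^ p ^ i * a j) * (a j0)⁻¹ := by
          rw [Finset.sum_mul]; exact Finset.sum_congr rfl fun j _ => by ring
      _ = 0 := by rw [this, zero_mul]
  by_cases hcase : ∀ j, b j ^ p = b j
  · -- all coefficients are in the prime field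
    choose c hcc using fun j => frob_fixed_mem p K (b j) (hcase j)
    refine ⟨c, ⟨j0, ?_⟩, ?_⟩
    · intro h0
      have := hcc j0
      rw [h0, map_zero, hbj0] at this
      exact zero_ne_one this
    · have h0 := hrow 0 j0.pos
      simp only [pow_zero, pow_one] at h0
      rw [← h0]
      exact Finset.sum_congr rfl fun j _ => by rw [hcc j, mul_comm]
  · push_neg at hcase
    obtain ⟨j1, hj1⟩ := hcase
    set cv : Fin n → K := fun j => b j - b j ^ p with hcv
    have hcvj1 : cv j1 ≠ 0 := sub_ne_zero.mpr (Ne.symm hj1)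
    have hcvj0 : cv j0 = 0 := by simp [hcv, hbj0]
    classical
    set S : Finset (Fin n) := Finset.univ.filter (fun j => cv j ≠ 0) with hS
    have hj1S : j1 ∈ S := by simp [hS, hcvj1]
    have hj0S : j0 ∉ S := by simp [hS, hcvj0]
    set m : ℕ := S.card with hmdef
    have hm : m < n := by
      have : S ⊂ Finset.univ := Finset.ssubset_univ_iff.mpr (fun h => hj0S (h ▸ Finset.mem_univ j0))
      simpa [hmdef] using (Finset.card_lt_card this).trans_le (by simp)
    set e : Fin m ↪o Fin n := S.orderEmbOfFin rfl with he
    have hSimg : S = Finset.univ.image (fun i => e i) := by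
      apply Finset.coe_injective
      rw [Finset.coe_image, Finset.coe_univ, Set.image_univ]
      exact (Finset.range_orderEmbOfFin S rfl).symm
    -- the shifted-row relations for cv restricted to S
    have hshift : ∀ k : Fin m, ∑ i : Fin m, r (e i) ^ p ^ ((k : ℕ) + 1) * cv (e i) = 0 := by
      intro k
      have hlt1 : (k : ℕ) + 1 < n := by omega
      have hlt0 : (k : ℕ) < n := by omega
      have h1 : ∑ j, r j ^ p ^ ((k : ℕ) + 1) * b j = 0 := hrow _ hlt1
      have h2 : ∑ j, r j ^ p ^ ((k : ℕ) + 1) * b j ^ p = 0 := by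
        calc ∑ j, r j ^ p ^ ((k : ℕ) + 1) * b j ^ p
            = ∑ j, (r j ^ p ^ (k : ℕ) * b j) ^ p := Finset.sum_congr rfl fun j _ => by
              rw [mul_pow (r j ^ p ^ (k : ℕ)) (b j) p, ← pow_mul, ← pow_succ]
          _ = (∑ j, r j ^ p ^ (k : ℕ) * b j) ^ p := (sum_pow_char ..).symm
          _ = 0 := by rw [hrow _ hlt0, zero_pow (Fact.out (p := p.Prime)).ne_zero]
      have hall : ∑ j, r j ^ p ^ ((k : ℕ) + 1) * cv j = 0 := by
        simp only [hcv, mul_sub]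
        rw [Finset.sum_sub_distrib, h1, h2, sub_zero]
      calc ∑ i : Fin m, r (e i) ^ p ^ ((k : ℕ) + 1) * cv (e i)
          = ∑ j ∈ S, r j ^ p ^ ((k : ℕ) + 1) * cv j := by
            rw [hSimg, Finset.sum_image (fun x _ y _ h => e.injective h)]
        _ = ∑ j, r j ^ p ^ ((k : ℕ) + 1) * cv j := by
            apply Finset.sum_subset (Finset.subset_univ S)
            intro x _ hx
            have : cv x = 0 := by
              by_contra hne
              exact hx (by simp [hS, hne])
            rw [this, mul_zero]
        _ = 0 := hall
    -- deduce the smaller Moore determinant vanishes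
    set M' : Matrix (Fin m) (Fin m) K := Matrix.of fun k i : Fin m => r (e i) ^ p ^ (k : ℕ) with hM'
    have hdetM' : M'.det = 0 := by
      have hN : (M'.map (frobenius K p)).det = 0 := by
        rw [← Matrix.exists_mulVec_eq_zero_iff]
        obtain ⟨i1, hi1⟩ : ∃ i : Fin m, e i = j1 := by
          have : j1 ∈ Set.range e := by rw [Finset.range_orderEmbOfFin]; exact_mod_cast hj1S
          exact this
        refine ⟨fun i => cv (e i), fun h => hcvj1 (by rw [← hi1]; exact congrFun h i1), ?_⟩
        funext k
        simp only [Matrix.mulVec, dotProduct, Matrix.map_apply, Matrix.of_apply,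
          Pi.zero_apply, frobenius_def]
        rw [← hshift k]
        exact Finset.sum_congr rfl fun i _ => by
          simp only [hM', Matrix.of_apply]
          rw [← pow_mul, ← pow_succ]
      rw [← RingHom.mapMatrix_apply, ← RingHom.map_det, frobenius_def] at hN
      exact pow_eq_zero_iff (Fact.out (p := p.Prime)).ne_zero |>.mp hN
    obtain ⟨d, ⟨i2, hd2⟩, hdsum⟩ := IH m hm (fun i => r (e i)) hdetM'
    -- extend d by zero to Fin n
    set c : Fin n → ZMod p := Function.extend e d 0 with hc
    refine ⟨c, ⟨e i2, ?_⟩, ?_⟩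
    · rw [hc, e.injective.extend_apply]
      exact hd2
    · have hzero : ∀ j ∈ Finset.univ, j ∉ S →
          ZMod.castHom (dvd_refl p) K (c j) * r j = 0 := by
        intro j _ hj
        have : c j = 0 := by
          rw [hc, Function.extend_apply']
          · rfl
          · rintro ⟨i, rfl⟩
            exact hj (by rw [hSimg]; exact Finset.mem_image_of_mem _ (Finset.mem_univ i))
        rw [this, map_zero, zero_mul]
      rw [← Finset.sum_subset (Finset.subset_univ S) hzero, hSimg,
        Finset.sum_image (fun x _ y _ h => e.injective h)]
      rw [← hdsum]
      exact Finset.sum_congr rfl fun i _ => by rw [hc, e.injective.extend_apply]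

end aux

/-- The Moore determinant of `r_1, …, r_n` over a field of characteristic `p` vanishes
iff `r_1, …, r_n` are linearly dependent over the prime field `F_p`. -/
theorem moore_determinant_eq_zero_iff (p : ℕ) (hp : p.Prime) (K : Type*) [Field K]
    [CharP K p] (n : ℕ) (r : Fin n → K) :
    Matrix.det (Matrix.of fun i j : Fin n => r j ^ p ^ (i : ℕ)) = 0 ↔
      ∃ c : Fin n → ZMod p, (∃ i, c i ≠ 0) ∧
        ∑ i, ZMod.castHom (dvd_refl p) K (c i) * r i = 0 := by
  haveI : Fact p.Prime := ⟨hp⟩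
  constructor
  · exact moore_aux p K n r
  · rintro ⟨c, ⟨i0, hi0⟩, hsum⟩
    rw [← Matrix.exists_mulVec_eq_zero_iff]
    refine ⟨fun j => ZMod.castHom (dvd_refl p) K (c j), ?_, ?_⟩
    · intro h
      apply hi0
      have := congrFun h i0
      simp only [Pi.zero_apply] at this
      exact ZMod.castHom_injective K (by rw [this, map_zero])
    · funext i
      simp only [Matrix.mulVec, dotProduct, Matrix.of_apply, Pi.zero_apply]
      have : ∀ c' : ZMod p, c' ^ p ^ (i : ℕ) = c' := by
        intro c'
        induction (i : ℕ) with
        | zero => simp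
        | succ k hk => rw [pow_succ, pow_mul, hk, ZMod.pow_card]
      calc ∑ j, r j ^ p ^ (i : ℕ) * ZMod.castHom (dvd_refl p) K (c j)
          = (∑ j, r j * ZMod.castHom (dvd_refl p) K (c j)) ^ p ^ (i : ℕ) := by
            rw [sum_pow_char_pow]
            exact Finset.sum_congr rfl fun j _ => by
              rw [mul_pow, ← map_pow, this]
        _ = 0 := by
            rw [show ∑ j, r j * ZMod.castHom (dvd_refl p) K (c j) = 0 from ?_, zero_pow]
            · exact (pow_pos hp.pos _).ne'
            · rw [← hsum]; exact Finset.sum_congr rfl fun j _ => mul_comm _ _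
end

section
/- Let P(z) be a nonzero polynomial over a field K of characteristic p > 0, and let L be an algebraic closure of K. Then the following are equivalent: (a) P(z) is additive, i.e., P(z) = c_0 z + c_1 z^p + ⋯ + c_n z^{p^n} for some c_0, ..., c_n ∈ K; (b) P(y+z) = P(y) + P(z) holds for all y, z ∈ L; (c) the set of roots of P in L forms an F_p-vector space under addition, all roots occur with the same multiplicity, and that common multiplicity is a power of p. -/
/-!
Over an infinite perfect field of characteristic `p`, an additive polynomial `f` has constant
derivative `c`, since `f(X + z) = f(X) + f(z)`; hence `f - cX` is `g(X^p)` for a polynomial `g`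
that is again additive (extract `p`-th roots). Induction shows that `f` is supported on powers
of `p`, and that its roots all have multiplicity `p^e`: either `c ≠ 0` and `f` is separable, or
`f(X) = g(X^p)`, which multiplies every multiplicity by `p`.

Conversely, if the roots `V` of `f` are closed under addition and all have multiplicity `p^e`,
then `f = a · Q^(p^e)` with `Q = ∏_{v ∈ V} (X - v)`. Translating by a root permutes `V`, so
`Q(X + x) - Q(X) - Q(x)` vanishes on `V` while having degree `< |V|`: `Q` is additive, hence so
is `f`.
-/

open Polynomial

theorem Finset.image_add_right_eq_self {M : Type*} [Add M] [IsRightCancelAdd M] [DecidableEq M]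
    {V : Finset M} (hV : ∀ x ∈ V, ∀ y ∈ V, x + y ∈ V) {v : M} (hv : v ∈ V) :
    V.image (· + v) = V :=
  Finset.eq_of_subset_of_card_le (Finset.image_subset_iff.mpr fun w hw => hV w hw v hv)
    (Finset.card_image_of_injective _ (add_left_injective v)).ge

namespace Polynomial

def IsAdditive {R : Type*} [Semiring R] (f : R[X]) : Prop :=
  ∀ x y, f.eval (x + y) = f.eval x + f.eval y

namespace IsAdditive

variable {R : Type*} [CommRing R] {f : R[X]}

theorem eval_zero (hf : f.IsAdditive) : f.eval 0 = 0 := by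
  simpa using hf 0 0

theorem C_mul (hf : f.IsAdditive) (a : R) : (C a * f).IsAdditive := fun x y => by
  simp only [eval_mul, eval_C, hf x y, mul_add]

theorem pow_expChar_pow {p : ℕ} [ExpChar R p] (hf : f.IsAdditive) (n : ℕ) :
    (f ^ p ^ n).IsAdditive := fun x y => by
  simp only [eval_pow, hf x y, add_pow_expChar_pow]

end IsAdditive

theorem isAdditive_of_support_subset {R : Type*} [CommRing R] {p : ℕ} [ExpChar R p] {f : R[X]}
    (hf : ↑f.support ⊆ Set.range (p ^ ·)) : f.IsAdditive := by
  intro x y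
  simp only [eval_eq_sum, sum_def, ← Finset.sum_add_distrib]
  refine Finset.sum_congr rfl fun n hn => ?_
  obtain ⟨i, rfl⟩ := hf hn
  rw [add_pow_expChar_pow, mul_add]

theorem exists_eq_sum_C_mul_X_pow_pow_iff {R : Type*} [Semiring R] {p : ℕ} (hp : 1 < p)
    {f : R[X]} :
    (∃ (m : ℕ) (c : ℕ → R), f = ∑ i ∈ Finset.range (m + 1), C (c i) * X ^ p ^ i) ↔
      ↑f.support ⊆ Set.range (p ^ ·) := by
  constructor
  · rintro ⟨m, c, rfl⟩ n hn
    rw [Finset.mem_coe, mem_support_iff, finsetSum_coeff] at hn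
    obtain ⟨i, -, hi⟩ := Finset.exists_ne_zero_of_sum_ne_zero hn
    rw [coeff_C_mul_X_pow] at hi
    exact ⟨i, (ite_ne_right_iff.mp hi).1.symm⟩
  · intro hf
    refine ⟨f.natDegree, fun i => f.coeff (p ^ i), ?_⟩
    have hsub : f.support ⊆ (Finset.range (f.natDegree + 1)).image (p ^ ·) := by
      intro n hn
      obtain ⟨i, rfl⟩ := hf hn
      refine Finset.mem_image_of_mem _ (Finset.mem_range.mpr (Nat.lt_succ_of_le ?_))
      exact (Nat.lt_pow_self hp).le.trans (le_natDegree_of_mem_supp _ hn)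
    conv_lhs => rw [as_sum_support_C_mul_X_pow f]
    rw [Finset.sum_subset hsub fun n _ hn => by rw [notMem_support_iff.mp hn, C_0, zero_mul],
      Finset.sum_image fun i _ j _ h => Nat.pow_right_injective hp h]

section Infinite

variable {F : Type*} [Field F] [Infinite F] {f : F[X]}

theorem IsAdditive.comp_X_add_C (hf : f.IsAdditive) (z : F) :
    f.comp (X + C z) = f + C (f.eval z) :=
  funext fun y => by simp only [eval_comp, eval_add, eval_X, eval_C, hf y z]

theorem IsAdditive.derivative_eq_C (hf : f.IsAdditive) :
    derivative f = C ((derivative f).eval 0) :=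
  funext fun z => by
    simpa [derivative_comp] using congrArg (fun g => (derivative g).eval 0) (hf.comp_X_add_C z)

variable {p : ℕ} [Fact p.Prime] [CharP F p] [PerfectRing F p]

theorem IsAdditive.exists_eq_C_mul_X_add_expand (hf : f.IsAdditive) :
    ∃ (c : F) (g : F[X]), g.IsAdditive ∧ f = C c * X + expand F p g := by
  set c := (derivative f).eval 0
  have hder : derivative (f - C c * X) = 0 := by
    rw [derivative_sub, hf.derivative_eq_C, derivative_C_mul_X, sub_self]
  set g := contract p (f - C c * X)
  have hexp : expand F p g = f - C c * X := expand_contract p hder (Fact.out : p.Prime).ne_zero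
  have hgf : ∀ u, g.eval (u ^ p) = f.eval u - c * u := fun u => by
    rw [← expand_eval, hexp, eval_sub, eval_mul, eval_C, eval_X]
  refine ⟨c, g, fun y z => ?_, by rw [hexp]; ring⟩
  obtain ⟨u, rfl⟩ := surjective_frobenius F p y
  obtain ⟨w, rfl⟩ := surjective_frobenius F p z
  simp only [frobenius_def, ← add_pow_char, hgf, hf u w]
  ring

theorem IsAdditive.support_subset (hf : f.IsAdditive) : ↑f.support ⊆ Set.range (p ^ ·) := by
  intro n hn
  induction n using Nat.strong_induction_on generalizing f with
  | _ n ih =>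
  rw [Finset.mem_coe, mem_support_iff] at hn
  obtain ⟨c, g, hg, rfl⟩ := hf.exists_eq_C_mul_X_add_expand (p := p)
  rcases Nat.lt_or_ge n 2 with hn2 | hn2
  · interval_cases n
    · rw [coeff_zero_eq_eval_zero] at hn
      exact absurd hf.eval_zero hn
    · exact ⟨0, pow_zero p⟩
  have hp := (Fact.out : p.Prime)
  rw [coeff_add, coeff_C_mul_X, if_neg (by omega), zero_add, coeff_expand hp.pos] at hn
  split_ifs at hn with hdvd
  · obtain ⟨i, hi⟩ :=
      ih (n / p) (Nat.div_lt_self (by omega) hp.one_lt) hg (mem_support_iff.mpr hn)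
    exact ⟨i + 1, by simp only at hi ⊢; rw [pow_succ, hi, Nat.div_mul_cancel hdvd]⟩
  · exact absurd rfl hn

theorem IsAdditive.exists_rootMultiplicity_eq_pow (hf : f.IsAdditive) (hf0 : f ≠ 0) :
    ∃ e : ℕ, ∀ x, f.IsRoot x → f.rootMultiplicity x = p ^ e := by
  induction hd : f.natDegree using Nat.strong_induction_on generalizing f with
  | _ d ih =>
  have hp := (Fact.out : p.Prime)
  obtain ⟨c, g, hg, rfl⟩ := hf.exists_eq_C_mul_X_add_expand (p := p)
  have hder : derivative (C c * X + expand F p g) = C c := by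
    simp [derivative_expand]
  by_cases hc : c = 0
  · subst hc
    rw [map_zero, zero_mul, zero_add] at hf0 hd ⊢
    have hg0 : g ≠ 0 := by rintro rfl; simp at hf0
    have hgdeg : 0 < g.natDegree :=
      natDegree_pos_of_eval₂_root hg0 (RingHom.id F) hg.eval_zero fun _ => id
    obtain ⟨e, he⟩ := ih g.natDegree (by rw [← hd, natDegree_expand]; nlinarith [hp.two_le])
      hg hg0 rfl
    refine ⟨e + 1, fun x hx => ?_⟩
    rw [rootMultiplicity_expand, he (x ^ p) (by rwa [IsRoot, ← expand_eval]), pow_succ']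
  · have hsep : (C c * X + expand F p g).Separable := by
      rw [separable_def, hder]
      exact ⟨0, C c⁻¹, by
        rw [zero_mul, zero_add, ← Polynomial.C_mul, inv_mul_cancel₀ hc, C_1]⟩
    exact ⟨0, fun x hx => le_antisymm (rootMultiplicity_le_one_of_separable hsep x)
      ((rootMultiplicity_pos hf0).mpr hx)⟩

end Infinite

theorem eval_add_prod_X_sub_C {R : Type*} [CommRing R] {V : Finset R}
    (hV : ∀ x ∈ V, ∀ y ∈ V, x + y ∈ V) {v : R} (hv : v ∈ V) (y : R) :
    (∏ w ∈ V, (X - C w)).eval (y + v) = (∏ w ∈ V, (X - C w)).eval y := by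
  classical
  conv_lhs => rw [← Finset.image_add_right_eq_self hV hv]
  rw [Finset.prod_image fun _ _ _ _ => add_right_cancel, eval_prod, eval_prod]
  refine Finset.prod_congr rfl fun w _ => ?_
  simp only [eval_sub, eval_X, eval_C]
  ring

theorem isAdditive_prod_X_sub_C {R : Type*} [CommRing R] [IsDomain R] {V : Finset R}
    (hV0 : V.Nonempty) (hV : ∀ x ∈ V, ∀ y ∈ V, x + y ∈ V) :
    (∏ v ∈ V, (X - C v)).IsAdditive := by
  set Q := ∏ v ∈ V, (X - C v)
  have hQ : IsMonicOfDegree Q V.card :=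
    ⟨natDegree_finsetProd_X_sub_C_eq_card V id,
      monic_prod_of_monic _ _ fun v _ => monic_X_sub_C v⟩
  intro x y
  set D := Q.comp (X + C x) - Q - C (Q.eval x)
  have hD : D = 0 := by
    refine eq_zero_of_natDegree_lt_card_of_eval_eq_zero' D V (fun v hv => ?_) ?_
    · have hQv : Q.eval v = 0 := by
        rw [eval_prod]
        exact Finset.prod_eq_zero hv (by rw [eval_sub, eval_X, eval_C, sub_self])
      have hQxv : Q.eval (x + v) = Q.eval x := eval_add_prod_X_sub_C hV hv x
      simp only [D, eval_sub, eval_comp, eval_add, eval_X, eval_C, add_comm v x, hQxv, hQv]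
      ring
    · rw [natDegree_sub_C]
      refine IsMonicOfDegree.natDegree_sub_lt hV0.card_pos.ne' ?_ hQ
      simpa using hQ.comp one_ne_zero (isMonicOfDegree_X_add_one x)
  have := congrArg (eval y) hD
  simp only [D, eval_sub, eval_comp, eval_add, eval_X, eval_C, eval_zero] at this
  rw [add_comm x y]
  linear_combination this

theorem eq_C_leadingCoeff_mul_prod_pow {F : Type*} [Field F] [IsAlgClosed F] [DecidableEq F]
    {f : F[X]} {k : ℕ} (hf : f ≠ 0) (hk : ∀ x, f.IsRoot x → f.rootMultiplicity x = k) :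
    f = C f.leadingCoeff * (∏ x ∈ f.roots.toFinset, (X - C x)) ^ k := by
  have hroots : f.roots = k • f.roots.toFinset.val := by
    ext x
    rw [count_roots, Multiset.count_nsmul, Multiset.toFinset_val, Multiset.count_dedup]
    split_ifs with hx
    · rw [hk x ((mem_roots hf).mp hx), mul_one]
    · rw [mul_zero, rootMultiplicity_eq_zero (mt (mem_roots hf).mpr hx)]
  conv_lhs =>
    rw [← C_leadingCoeff_mul_prod_multiset_X_sub_C (p := f) IsAlgClosed.card_roots_eq_natDegree,
      hroots]
  rw [Multiset.map_nsmul, Multiset.prod_nsmul, Finset.prod_eq_multiset_prod]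

end Polynomial

/-- Characterization of additive polynomials over a field `K` of characteristic `p`,
with `L` an algebraic closure of `K`. The following are equivalent for a nonzero
polynomial `P` over `K`: (a) `P` is additive, i.e. of the form
`c_0 z + c_1 z^p + ⋯ + c_m z^{p^m}`; (b) `P(y + z) = P(y) + P(z)` for all `y, z ∈ L`;
(c) the roots of `P` in `L` form an `F_p`-vector space under addition, all roots occur
with the same multiplicity, and that multiplicity is a power of `p`. -/
theorem additive_polynomial_tfae (p : ℕ) (hp : p.Prime) (K : Type*) [Field K]
    [CharP K p] (P : Polynomial K) (hP : P ≠ 0) :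
    ((∃ (m : ℕ) (c : ℕ → K),
        P = ∑ i ∈ Finset.range (m + 1), Polynomial.C (c i) * Polynomial.X ^ p ^ i) ↔
      (∀ y z : AlgebraicClosure K,
        Polynomial.aeval (y + z) P = Polynomial.aeval y P + Polynomial.aeval z P)) ∧
    ((∃ (m : ℕ) (c : ℕ → K),
        P = ∑ i ∈ Finset.range (m + 1), Polynomial.C (c i) * Polynomial.X ^ p ^ i) ↔
      ((Polynomial.aeval (0 : AlgebraicClosure K) P = 0) ∧
        (∀ y z : AlgebraicClosure K,
          Polynomial.aeval y P = 0 → Polynomial.aeval z P = 0 →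
            Polynomial.aeval (y + z) P = 0) ∧
        ∃ e : ℕ, ∀ y : AlgebraicClosure K, Polynomial.aeval y P = 0 →
          Polynomial.rootMultiplicity y
            (P.map (algebraMap K (AlgebraicClosure K))) = p ^ e)) := by
  classical
  have := Fact.mk hp
  set f := P.map (algebraMap K (AlgebraicClosure K))
  have hf : f ≠ 0 := Polynomial.map_ne_zero hP
  simp only [← eval_map_algebraMap]
  have hab : (∃ (m : ℕ) (c : ℕ → K),
      P = ∑ i ∈ Finset.range (m + 1), C (c i) * X ^ p ^ i) ↔ f.IsAdditive := by
    rw [exists_eq_sum_C_mul_X_pow_pow_iff hp.one_lt,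
      ← support_map_of_injective P (algebraMap K (AlgebraicClosure K)).injective]
    exact ⟨isAdditive_of_support_subset, IsAdditive.support_subset⟩
  refine ⟨hab, hab.trans ⟨fun hadd => ⟨hadd.eval_zero, fun y z hy hz => ?_,
    hadd.exists_rootMultiplicity_eq_pow hf⟩, ?_⟩⟩
  · rw [hadd, hy, hz, add_zero]
  · rintro ⟨h0, hclosed, e, hmult⟩
    have hroots : ∀ y, y ∈ f.roots.toFinset ↔ f.eval y = 0 := fun y => by
      rw [Multiset.mem_toFinset, mem_roots hf, IsRoot]
    rw [eq_C_leadingCoeff_mul_prod_pow hf hmult]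
    refine ((isAdditive_prod_X_sub_C ⟨0, (hroots 0).mpr h0⟩ fun y hy z hz => ?_).pow_expChar_pow
      e).C_mul _
    exact (hroots _).mpr (hclosed y z ((hroots y).mp hy) ((hroots z).mp hz))
end

section
/- Let K ⊆ L be fields of characteristic p > 0 and let α ∈ L. Then α is algebraic over K if and only if α is a root of some nonzero additive polynomial over K. -/
open Polynomial Finset

/-- Ore's lemma: for `K ⊆ L` fields of characteristic `p > 0`, an element `α ∈ L` is
algebraic over `K` iff it is a root of some nonzero additive polynomial over `K`. -/
theorem algebraic_iff_root_of_additive (p : ℕ) (hp : p.Prime) (K L : Type*) [Field K]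
    [Field L] [Algebra K L] [CharP K p] (α : L) :
    IsAlgebraic K α ↔
      ∃ P : Polynomial K, P ≠ 0 ∧
        (∃ (m : ℕ) (c : ℕ → K),
          P = ∑ i ∈ Finset.range (m + 1), Polynomial.C (c i) * Polynomial.X ^ p ^ i) ∧
        Polynomial.aeval α P = 0 := by
  constructor
  · intro halg
    have hint : IsIntegral K α := halg.isIntegral
    have : Module.Finite K (Algebra.adjoin K {α}) :=
      ⟨(Submodule.fg_top _).mpr hint.fg_adjoin_singleton⟩
    have hmem : α ∈ Algebra.adjoin K {α} := Algebra.self_mem_adjoin_singleton K α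
    set β : Algebra.adjoin K {α} := ⟨α, hmem⟩
    have hdep : ¬ LinearIndependent K (fun i : ℕ => β ^ p ^ i) :=
      Module.Finite.not_linearIndependent_of_infinite _
    obtain ⟨s, g, hsum, j, hjs, hgj⟩ := not_linearIndependent_iff.mp hdep
    classical
    set m : ℕ := s.sup id
    set c : ℕ → K := fun i => if i ∈ s then g i else 0
    set P : Polynomial K := ∑ i ∈ Finset.range (m + 1), C (c i) * X ^ p ^ i with hP
    have hpinj : Function.Injective (fun i : ℕ => p ^ i) :=
      fun a b h => Nat.pow_right_injective hp.two_le h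
    have hjm : j ∈ Finset.range (m + 1) :=
      mem_range.mpr (Nat.lt_succ_of_le (le_sup (f := id) hjs))
    have hcoeff : P.coeff (p ^ j) = c j := by
      rw [hP, finset_sum_coeff]
      rw [Finset.sum_eq_single j]
      · simp [coeff_C_mul, coeff_X_pow]
      · intro b hb hbj
        have : p ^ j ≠ p ^ b := fun h => hbj ((hpinj h).symm)
        simp [coeff_C_mul, coeff_X_pow, this]
      · intro h; exact absurd hjm h
    refine ⟨P, ?_, ⟨m, c, rfl⟩, ?_⟩
    · intro h0
      rw [h0, coeff_zero] at hcoeff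
      exact hgj (by simpa [c, hjs] using hcoeff.symm)
    · have hsum' : ∑ i ∈ s, g i • α ^ p ^ i = 0 := by
        have := congrArg (Subtype.val) hsum
        simpa [β] using this
      rw [hP]
      simp only [map_sum, map_mul, map_pow, aeval_C, aeval_X]
      have hsub : s ⊆ Finset.range (m + 1) := fun i hi =>
          mem_range.mpr (Nat.lt_succ_of_le (le_sup (f := id) hi))
      rw [← Finset.sum_subset hsub (fun i _ hi => by simp [c, hi])]
      calc ∑ i ∈ s, algebraMap K L (c i) * α ^ p ^ i
          = ∑ i ∈ s, g i • α ^ p ^ i := by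
            refine Finset.sum_congr rfl fun i hi => ?_
            simp [c, hi, Algebra.smul_def]
        _ = 0 := hsum'
  · rintro ⟨P, hP0, _, hPα⟩
    exact ⟨P, hP0, hPα⟩
end

section
/- Let K ⊆ L be fields of characteristic p > 0, let A and B be n × n matrices with entries in K, at least one of which is invertible, and let w ∈ K^n be a column vector. Suppose v ∈ L^n is a vector such that A v^σ + B v = w, where v^σ denotes the vector obtained from v by raising each entry to the p-th power. Then every entry of v is algebraic over K. -/
/-!
If `A` is invertible, `v^σ` is a `K`-affine function of `v`, so the finite-dimensional `K`-span
of `1, v₁, …, vₙ` is stable under Frobenius and contains every `vᵢ ^ p ^ k`; these powers cannot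
all be linearly independent, so `vᵢ` is algebraic.

If `B` is invertible, every `vⱼ` is a `K`-linear combination of `p`-th powers, which all
`K`-derivations kill. Hence the finitely generated extension `K(v)/K` has no nonzero derivations,
i.e. `Ω[K(v)⁄K] = 0`, so it is formally unramified, hence separable algebraic.
-/

open Submodule Set

theorem Submodule.mem_of_forall_sum_smul_mem_of_isUnit_det {K M ι : Type*} [CommRing K]
    [AddCommGroup M] [Module K M] [Fintype ι] [DecidableEq ι] {A : Matrix ι ι K}
    (hA : IsUnit A.det) {N : Submodule K M} {x : ι → M}
    (hx : ∀ i, ∑ j, A i j • x j ∈ N) (j : ι) : x j ∈ N := by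
  have hx_eq : x j = ∑ i, A⁻¹ j i • ∑ k, A i k • x k := by
    simp only [Finset.smul_sum, smul_smul]
    rw [Finset.sum_comm]
    simp only [← Finset.sum_smul, ← Matrix.mul_apply, Matrix.nonsing_inv_mul A hA,
      Matrix.one_apply, ite_smul, one_smul, zero_smul, Finset.sum_ite_eq, Finset.mem_univ,
      if_true]
  rw [hx_eq]
  exact N.sum_mem fun i _ => N.smul_mem _ (hx i)

theorem mem_span_insert_one_of_sum_add_sum {K L ι : Type*} [CommRing K] [CommRing L]
    [Algebra K L] [Fintype ι] [DecidableEq ι] {A B : Matrix ι ι K} (hA : IsUnit A.det)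
    {w : ι → K} {x z : ι → L}
    (h : ∀ i, ∑ j, algebraMap K L (A i j) * x j + ∑ j, algebraMap K L (B i j) * z j =
      algebraMap K L (w i)) (j : ι) :
    x j ∈ span K (insert 1 (range z)) := by
  refine mem_of_forall_sum_smul_mem_of_isUnit_det hA (fun i => ?_) j
  have hsum : ∑ j, A i j • x j = w i • (1 : L) - ∑ j, B i j • z j := by
    simp only [Algebra.smul_def, mul_one]
    exact eq_sub_of_add_eq (h i)
  rw [hsum]
  exact sub_mem (smul_mem _ _ (subset_span (mem_insert _ _)))
    (sum_mem fun l _ => smul_mem _ _ (subset_span (mem_insert_of_mem _ (mem_range_self l))))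

theorem pow_mem_span_of_forall_pow_mem {K L : Type*} [CommSemiring K] [CommSemiring L]
    [Algebra K L] {p : ℕ} [ExpChar L p] {s : Set L} (hs : ∀ x ∈ s, x ^ p ∈ span K s)
    {y : L} (hy : y ∈ span K s) : y ^ p ∈ span K s := by
  induction hy using Submodule.span_induction with
  | mem x hx => exact hs x hx
  | zero => rw [zero_pow (expChar_pos L p).ne']; exact zero_mem _
  | add a b _ _ ha hb => rw [add_pow_expChar]; exact add_mem ha hb
  | smul c a _ ha => rw [smul_pow]; exact smul_mem _ _ ha

theorem isAlgebraic_of_forall_pow_pow_mem {K L : Type*} [Field K] [CommRing L] [Algebra K L]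
    {V : Submodule K L} [FiniteDimensional K V] {x : L} {q : ℕ} (hq : 1 < q)
    (hx : ∀ k, x ^ q ^ k ∈ V) : IsAlgebraic K x := by
  by_contra htr
  have hpow : LinearIndependent K fun n : ℕ => x ^ n := by
    have := (Polynomial.basisMonomials K).linearIndependent.map'
      (Polynomial.aeval x).toLinearMap
      (LinearMap.ker_eq_bot.mpr (transcendental_iff_injective.mp htr))
    simpa [Function.comp_def] using this
  have hV : LinearIndependent K fun k : ℕ => (⟨x ^ q ^ k, hx k⟩ : V) :=
    LinearIndependent.of_comp V.subtype (hpow.comp _ (Nat.pow_right_injective hq))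
  exact Module.Finite.not_linearIndependent_of_infinite _ hV

theorem isAlgebraic_of_pow_mem_span_insert_one {K L ι : Type*} [Field K] [CommRing L]
    [Algebra K L] {p : ℕ} [ExpChar L p] (hp : 1 < p) [Finite ι] {v : ι → L}
    (hv : ∀ j, v j ^ p ∈ span K (insert 1 (range v))) (i : ι) : IsAlgebraic K (v i) := by
  set V := span K (insert 1 (range v))
  have : FiniteDimensional K V := FiniteDimensional.span_of_finite K ((finite_range v).insert 1)
  have hfrob : ∀ y ∈ V, y ^ p ∈ V := fun y => pow_mem_span_of_forall_pow_mem <| by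
    rintro _ (rfl | ⟨j, rfl⟩)
    · rw [one_pow]; exact subset_span (mem_insert _ _)
    · exact hv j
  refine isAlgebraic_of_forall_pow_pow_mem (V := V) hp fun k => ?_
  induction k with
  | zero => simpa using subset_span (mem_insert_of_mem _ (mem_range_self i))
  | succ k ih => rw [pow_succ, pow_mul]; exact hfrob _ ih

theorem Derivation.map_eq_zero_of_mem_span_pow {K A M : Type*} [CommSemiring K] [CommRing A]
    [Algebra K A] [AddCommMonoid M] [Module A M] [Module K M]
    (D : Derivation K A M) (p : ℕ) [CharP A p] {x : A}
    (hx : x ∈ span K (range fun a : A => a ^ p)) : D x = 0 := by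
  induction hx using Submodule.span_induction with
  | mem x hx =>
    obtain ⟨a, rfl⟩ := hx
    rw [D.leibniz_pow, ← Nat.cast_smul_eq_nsmul A, CharP.cast_eq_zero, zero_smul]
  | zero => exact D.map_zero
  | add a b _ _ ha hb => rw [D.map_add, ha, hb, add_zero]
  | smul c a _ ha => rw [D.map_smul, ha, smul_zero]

def Derivation.constants {K F M : Type*} [Field K] [Field F] [Algebra K F] [AddCommGroup M]
    [Module F M] [Module K M] (D : Derivation K F M) :
    IntermediateField K F where
  carrier := {x | D x = 0}
  mul_mem' {a b} ha hb := by simp_all [D.leibniz]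
  add_mem' {a b} ha hb := by simp_all
  algebraMap_mem' c := D.map_algebraMap c
  inv_mem' a ha := by
    by_cases h0 : a = 0
    · simp [h0]
    have := D.leibniz a a⁻¹
    rw [mul_inv_cancel₀ h0, D.map_one_eq_zero, show D a = 0 from ha, smul_zero, add_zero] at this
    exact (smul_eq_zero.mp this.symm).resolve_left h0

theorem isSeparable_of_adjoin_eq_top_of_subset_span_pow {K F : Type*} [Field K] [Field F]
    [Algebra K F] (p : ℕ) [CharP F p] [Algebra.EssFiniteType K F] {s : Set F}
    (hs : IntermediateField.adjoin K s = ⊤) (hsp : s ⊆ span K (range fun a : F => a ^ p)) :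
    Algebra.IsSeparable K F := by
  set D := KaehlerDifferential.D K F
  have hD : ∀ x, D x = 0 := by
    have : IntermediateField.adjoin K s ≤ D.constants := IntermediateField.adjoin_le_iff.mpr
      fun x hx => D.map_eq_zero_of_mem_span_pow p (hsp hx)
    exact fun x => this (hs ▸ IntermediateField.mem_top)
  have : Subsingleton Ω[F⁄K] := by
    suffices (⊤ : Submodule F Ω[F⁄K]) ≤ ⊥ from
      (subsingleton_iff_forall_eq 0).mpr fun y ↦ this trivial
    rw [← KaehlerDifferential.span_range_derivation, Submodule.span_le]
    rintro _ ⟨x, rfl⟩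
    exact hD x
  have : Algebra.FormallyUnramified K F := ⟨this⟩
  exact (Algebra.FormallyUnramified.iff_isSeparable K F).mp this

theorem isAlgebraic_of_mem_span_insert_one_pow {K L ι : Type*} [Field K] [Field L] [Algebra K L]
    (p : ℕ) [CharP L p] [Finite ι] {v : ι → L}
    (hv : ∀ j, v j ∈ span K (insert 1 (range fun l => v l ^ p))) (i : ι) :
    IsAlgebraic K (v i) := by
  set F := IntermediateField.adjoin K (range v)
  have : Algebra.EssFiniteType K F := IntermediateField.essFiniteType_iff.mpr
    (IntermediateField.fg_adjoin_of_finite (finite_range v))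
  let g : ι → F := fun j => ⟨v j, IntermediateField.subset_adjoin K _ (mem_range_self j)⟩
  have hg : IntermediateField.adjoin K (range g) = ⊤ := by
    apply IntermediateField.lift_injective
    rw [IntermediateField.lift_adjoin, IntermediateField.lift_top, ← range_comp]
    rfl
  have hgp : range g ⊆ span K (range fun a : F => a ^ p) := by
    rintro _ ⟨j, rfl⟩
    rw [SetLike.mem_coe,
      ← apply_mem_span_image_iff_mem_span (f := F.val.toLinearMap) Subtype.val_injective]
    refine span_mono ?_ (hv j)
    rintro _ (rfl | ⟨l, rfl⟩)
    · exact ⟨1, ⟨1, one_pow p⟩, rfl⟩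
    · exact ⟨g l ^ p, ⟨g l, rfl⟩, rfl⟩
  have : Algebra.IsSeparable K F := isSeparable_of_adjoin_eq_top_of_subset_span_pow p hg hgp
  exact IntermediateField.isAlgebraic_iff.mp
    ((Algebra.IsSeparable.isAlgebraic K F).isAlgebraic (g i))

/-- Let `K ⊆ L` be fields of characteristic `p > 0`, `A, B` square matrices over `K`
with at least one of them invertible, and `w` a vector over `K`. If `v` is a vector over
`L` with `A v^σ + B v = w` (`σ` the `p`-power Frobenius applied entrywise), then every
entry of `v` is algebraic over `K`. -/
theorem semilinear_system_algebraic (p : ℕ) (hp : p.Prime) (K L : Type*) [Field K]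
    [Field L] [Algebra K L] [CharP K p] (n : ℕ)
    (A B : Matrix (Fin n) (Fin n) K) (hAB : IsUnit A.det ∨ IsUnit B.det)
    (w : Fin n → K) (v : Fin n → L)
    (hv : ∀ i, (∑ j, algebraMap K L (A i j) * v j ^ p) +
      (∑ j, algebraMap K L (B i j) * v j) = algebraMap K L (w i)) :
    ∀ i, IsAlgebraic K (v i) := by
  have : CharP L p := charP_of_injective_algebraMap (algebraMap K L).injective p
  rcases hAB with hA | hB
  · have : ExpChar L p := ExpChar.prime hp
    exact isAlgebraic_of_pow_mem_span_insert_one hp.one_lt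
      (mem_span_insert_one_of_sum_add_sum hA hv)
  · exact isAlgebraic_of_mem_span_insert_one_pow p
      (mem_span_insert_one_of_sum_add_sum hB fun i => (add_comm _ _).trans (hv i))
end

section
/- Suppose x_1, ..., x_m ∈ F_q((t^ℚ)) each have support contained in (0, 1] ∩ T_c for the same nonnegative integer c and are each algebraic over F_q((t)). If x_1, ..., x_m are linearly dependent over F_q((t)), then they are linearly dependent over F_q. -/
/-- A deterministic finite automaton with output (DFAO): transition function,
initial state, and output function. -/
structure DFAO (α Q Δ : Type*) where
  step : Q → α → Q
  start : Q
  out : Q → Δ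

/-- The output of a DFAO on an input string. -/
def DFAO.eval {α Q Δ : Type*} (M : DFAO α Q Δ) (s : List α) : Δ :=
  M.out (s.foldl M.step M.start)

/-- A language is regular if it is accepted by a DFA with finitely many states. -/
def IsRegularLang {α : Type*} (L : Set (List α)) : Prop :=
  ∃ (n : ℕ) (M : DFA α (Fin n)), M.accepts = L

/-- The value of a list of base-`b` digits, most significant digit first. -/
def digitsVal (b : ℕ) (l : List ℕ) : ℕ := l.foldl (fun acc d => acc * b + d) 0

/-- A valid preradix digit string: digits less than `b`, no leading zero. -/
def ValidPre (b : ℕ) (pre : List ℕ) : Prop :=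
  (∀ d ∈ pre, d < b) ∧ pre.head? ≠ some 0

/-- A valid postradix digit string: digits less than `b`, no trailing zero. -/
def ValidPost (b : ℕ) (post : List ℕ) : Prop :=
  (∀ d ∈ post, d < b) ∧ post.getLast? ≠ some 0

/-- The string over the alphabet `Σ_b = Option ℕ` (digits `some d`, radix point `none`)
whose preradix digits are `pre` and postradix digits are `post`. -/
def expString (pre post : List ℕ) : List (Option ℕ) :=
  pre.map some ++ none :: post.map some

/-- The value of the base-`b` expansion with preradix digits `pre` and postradix
digits `post`. -/
def expValue (b : ℕ) (pre post : List ℕ) : ℚ :=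
  (digitsVal b pre : ℚ) + (digitsVal b post : ℚ) / (b : ℚ) ^ post.length

/-- `S_b`: the set of nonnegative `b`-adic rationals. -/
def Sb (b : ℕ) : Set ℚ := {x : ℚ | ∃ m n : ℕ, x = (m : ℚ) / (b : ℚ) ^ n}

/-- A function `f` (restricted to `S_b`) is `b`-automatic if some DFAO with finitely
many states, fed the valid base-`b` expansion of `v ∈ S_b`, outputs `f v`. -/
def IsBAutomatic (b : ℕ) {Δ : Type*} (f : ℚ → Δ) : Prop :=
  ∃ (n : ℕ) (M : DFAO (Option ℕ) (Fin n) Δ),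
    ∀ pre post : List ℕ, ValidPre b pre → ValidPost b post →
      M.eval (expString pre post) = f (expValue b pre post)

/-- A subset `S ⊆ S_b` is `b`-regular if the language of valid base-`b` expansions of
its elements is regular. -/
def IsBRegular (b : ℕ) (S : Set ℚ) : Prop :=
  IsRegularLang {s : List (Option ℕ) | ∃ pre post : List ℕ,
    ValidPre b pre ∧ ValidPost b post ∧ s = expString pre post ∧ expValue b pre post ∈ S}

/-- The element `t` of the Hahn series field `F((t^ℚ))`. -/
noncomputable def tHahn (F : Type*) [Field F] : HahnSeries ℚ F := HahnSeries.single (1 : ℚ) 1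

/-- The natural ring homomorphism `F[t] → F((t^ℚ))`. -/
noncomputable def polyToHahn (F : Type*) [Field F] : Polynomial F →+* HahnSeries ℚ F :=
  (Polynomial.aeval (tHahn F)).toRingHom

/-- `x ∈ F((t^ℚ))` is algebraic over the rational function field `F(t)`; equivalently
(clearing denominators), `x` is a root of a nonzero polynomial with coefficients
in `F[t]`. -/
def AlgebraicOverRatFunc (F : Type*) [Field F] (x : HahnSeries ℚ F) : Prop :=
  ∃ P : Polynomial (Polynomial F), P ≠ 0 ∧ Polynomial.eval₂ (polyToHahn F) x P = 0

/-- The natural embedding `F((t)) → F((t^ℚ))` of Laurent series into generalized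
Laurent series. -/
noncomputable def laurentToHahn (F : Type*) [Field F] : LaurentSeries F →+* HahnSeries ℚ F :=
  HahnSeries.embDomainRingHom (Int.castAddHom ℚ) Int.cast_injective
    (fun _ _ => Int.cast_le)

/-- `x ∈ F((t^ℚ))` is algebraic over the Laurent series field `F((t))`. -/
def AlgebraicOverLaurent (F : Type*) [Field F] (x : HahnSeries ℚ F) : Prop :=
  ∃ P : Polynomial (LaurentSeries F), P ≠ 0 ∧ Polynomial.eval₂ (laurentToHahn F) x P = 0

/-- A generalized Laurent series `x = Σ_i x_i t^i` is `p`-quasi-automatic if for some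
integers `a > 0` and `b`, the set `aS + b` (where `S` is the support of `x`) consists of
nonnegative `p`-adic rationals, and the function `i ↦ x_{(i-b)/a}` is `p`-automatic. -/
def IsPQuasiAutomatic (p : ℕ) {F : Type*} [Field F] (x : HahnSeries ℚ F) : Prop :=
  ∃ a b : ℤ, 0 < a ∧ (∀ i ∈ x.support, (a : ℚ) * i + (b : ℚ) ∈ Sb p) ∧
    IsBAutomatic p (fun j : ℚ => x.coeff ((j - (b : ℚ)) / (a : ℚ)))

/-- A generalized Laurent series is `p`-automatic if its support consists of nonnegative
`p`-adic rationals and its coefficient function is `p`-automatic. -/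
def IsPAutomatic (p : ℕ) {F : Type*} [Field F] (x : HahnSeries ℚ F) : Prop :=
  x.support ⊆ Sb p ∧ IsBAutomatic p x.coeff

/-- The set `T_c ⊆ S_p` of rationals of the form `n - b_1 p⁻¹ - b_2 p⁻² - ⋯` with `n` a
nonnegative integer, `b_i ∈ {0, …, p-1}`, and `Σ b_i ≤ c`. -/
def Tset (p c : ℕ) : Set ℚ :=
  {x : ℚ | ∃ (n : ℕ) (b : ℕ →₀ ℕ), (∀ i, b i < p) ∧ (b.sum fun _ v => v) ≤ c ∧
    x = (n : ℚ) - ∑ i ∈ b.support, (b i : ℚ) * (p : ℚ) ^ (-(i + 1) : ℤ)}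

/-! Since all `x_k` are supported in `(0, 1]` and Laurent series are supported in `ℤ`, the
coefficient of `t ^ (N + q)` (with `N ∈ ℤ`, `q ∈ (0, 1]`) in `∑ a_k x_k` is `∑ (a_k)_N (x_k)_q`.
Hence the `N`-th coefficients of an `F((t))`-linear relation, for any `N` at which some `a_k`
is nonzero, form a nontrivial `F`-linear relation. -/

open HahnSeries

theorem Int.eq_of_intCast_add_eq_intCast_add_of_mem_Ioc {R : Type*} [Ring R] [LinearOrder R]
    [IsStrictOrderedRing R] [FloorRing R] {M N : ℤ} {a b : R} (ha : a ∈ Set.Ioc 0 1)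
    (hb : b ∈ Set.Ioc 0 1) (h : (M : R) + a = N + b) : M = N := by
  have hceil := congrArg Int.ceil h
  rwa [Int.ceil_intCast_add, Int.ceil_intCast_add,
    Int.ceil_eq_on_Ioc 1 a (by simpa using ha), Int.ceil_eq_on_Ioc 1 b (by simpa using hb),
    add_left_inj] at hceil

section LaurentToHahn

variable (F : Type*) [Field F]

theorem laurentToHahn_coeff_intCast (f : LaurentSeries F) (N : ℤ) :
    (laurentToHahn F f).coeff (N : ℚ) = f.coeff N :=
  embDomain_coeff

theorem support_laurentToHahn_subset (f : LaurentSeries F) :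
    (laurentToHahn F f).support ⊆ Set.range ((↑) : ℤ → ℚ) :=
  support_embDomain_subset.trans (Set.image_subset_range _ _)

theorem coeff_laurentToHahn_mul_intCast_add (f : LaurentSeries F) {y : HahnSeries ℚ F}
    (hy : y.support ⊆ Set.Ioc 0 1) (N : ℤ) {q : ℚ} (hq : q ∈ Set.Ioc 0 1) :
    (laurentToHahn F f * y).coeff ((N : ℚ) + q) = f.coeff N * y.coeff q := by
  rw [coeff_mul, Finset.sum_eq_single ((N : ℚ), q)]
  · rw [laurentToHahn_coeff_intCast]
  · rintro ⟨a, b⟩ hab hne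
    obtain ⟨ha, hb, hsum⟩ := Finset.mem_antidiagonal.1 hab
    obtain ⟨M, rfl⟩ := support_laurentToHahn_subset F f ha
    obtain rfl := Int.eq_of_intCast_add_eq_intCast_add_of_mem_Ioc (hy hb) hq hsum
    obtain rfl : b = q := by simpa using hsum
    exact absurd rfl hne
  · intro hnot
    by_contra hprod
    exact hnot (Finset.mem_antidiagonal.2
      ⟨left_ne_zero_of_mul hprod, right_ne_zero_of_mul hprod, rfl⟩)

theorem sum_coeff_smul_eq_zero_of_sum_laurentToHahn_mul_eq_zero {ι : Type*} (s : Finset ι)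
    (a : ι → LaurentSeries F) {x : ι → HahnSeries ℚ F}
    (hx : ∀ k ∈ s, (x k).support ⊆ Set.Ioc 0 1)
    (h : ∑ k ∈ s, laurentToHahn F (a k) * x k = 0) (N : ℤ) :
    ∑ k ∈ s, (a k).coeff N • x k = 0 := by
  ext q
  simp only [coeff_sum, coeff_smul, smul_eq_mul, coeff_zero]
  by_cases hq : q ∈ Set.Ioc 0 1
  · calc ∑ k ∈ s, (a k).coeff N * (x k).coeff q
        = (∑ k ∈ s, laurentToHahn F (a k) * x k).coeff ((N : ℚ) + q) := by
          rw [coeff_sum]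
          exact Finset.sum_congr rfl fun k hk =>
            (coeff_laurentToHahn_mul_intCast_add F (a k) (hx k hk) N hq).symm
      _ = 0 := by rw [h, coeff_zero]
  · refine Finset.sum_eq_zero fun k hk => ?_
    rw [of_not_not fun hne => hq (hx k hk hne), mul_zero]

end LaurentToHahn

theorem linearly_dependent_descends_general (p : ℕ)
    (F : Type*) [Field F] (c : ℕ)
    (m : ℕ) (x : Fin m → HahnSeries ℚ F)
    (hsupp : ∀ k, (x k).support ⊆ Set.Ioc (0 : ℚ) 1 ∩ Tset p c)
    (hdep : ∃ cc : Fin m → LaurentSeries F, (∃ k, cc k ≠ 0) ∧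
      ∑ k, laurentToHahn F (cc k) * x k = 0) :
    ∃ d : Fin m → F, (∃ k, d k ≠ 0) ∧ ∑ k, d k • x k = 0 := by
  obtain ⟨cc, ⟨k, hk⟩, hsum⟩ := hdep
  obtain ⟨N, hN⟩ := support_nonempty_iff.2 hk
  exact ⟨fun k => (cc k).coeff N, ⟨k, hN⟩,
    sum_coeff_smul_eq_zero_of_sum_laurentToHahn_mul_eq_zero F _ cc
      (fun k _ => (hsupp k).trans Set.inter_subset_left) hsum N⟩

/-- If `x_1, …, x_m ∈ F_q((t^ℚ))` have supports in `(0,1] ∩ T_c`, are algebraic over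
`F_q((t))`, and are linearly dependent over `F_q((t))`, then they are linearly
dependent over `F_q`. -/
theorem linearly_dependent_descends (p n : ℕ) (hp : p.Prime) (hn : 0 < n)
    (F : Type*) [Field F] [Fintype F] (hcard : Fintype.card F = p ^ n) (c : ℕ)
    (m : ℕ) (x : Fin m → HahnSeries ℚ F)
    (hsupp : ∀ k, (x k).support ⊆ Set.Ioc (0 : ℚ) 1 ∩ Tset p c)
    (halg : ∀ k, AlgebraicOverLaurent F (x k))
    (hdep : ∃ cc : Fin m → LaurentSeries F, (∃ k, cc k ≠ 0) ∧
      ∑ k, laurentToHahn F (cc k) * x k = 0) :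
    ∃ d : Fin m → F, (∃ k, d k ≠ 0) ∧ ∑ k, d k • x k = 0 :=
  linearly_dependent_descends_general p F c m x hsupp hdep
end
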